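/- arXiv:1201.5495 — 2 statements merged into one kernel-verified Lean document; each statement's English description precedes it below -/
import Mathlib

section
/- Let (P, ≤) be a well-founded partial order, α an ordinal, and suppose P is a sum-augmentation of partial orders (B₁, …, Bₙ). If rank(P) = ω^α, then rank(Bᵢ) = ω^α for some i ∈ {1, …, n}. In other words, the ordinals of the form ω^α are rank-sum-indecomposable for the class of well-founded partial orders. -/
/-!
If `P = S ∪ T`, let `relRank S p` be the rank `p` would have on top of its strict lower set in
`S`. Then `p ↦ relRank S p ♯ relRank T p` (`♯` the Hessenberg natural sum) is strictly monotone
on `P` and stays below `rank S ♯ rank T`, so `rank P ≤ rank S ♯ rank T`. The ordinals `ω ^ α`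
are closed under `♯`: for `a, b < ω ^ (γ + 1)`, computing `♯` separately on quotients and
remainders modulo `ω ^ γ` keeps `a ♯ b` below `ω ^ γ * (n + 1)` for some `n < ω`. Hence a finite
union of parts of rank `< ω ^ α` has rank `< ω ^ α`.
-/

universe u

/-- The ordinal rank of an element of a well-founded partial order:
`rank p = sup { rank p' + 1 | p' < p }`. -/
noncomputable def elRank {P : Type u} [PartialOrder P] [WellFoundedLT P] (p : P) :
    Ordinal.{u} :=
  IsWellFounded.rank (α := P) (· < ·) p

/-- The ordinal rank of a well-founded partial order:
`rank P = sup { rank p + 1 | p ∈ P }` (with `sup ∅ = 0`). -/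
noncomputable def ordRank (P : Type u) [PartialOrder P] [WellFoundedLT P] : Ordinal.{u} :=
  ⨆ p : P, elRank p + 1

/-- `A` is a sum-augmentation of `(B 0, …, B (n-1))`: the domain of `A` can be partitioned
into `n` parts such that the suborder induced on the `i`-th part is order-isomorphic
to `B i`. -/
def SumAugmentation {n : ℕ} (A : Type u) [PartialOrder A] (B : Fin n → Type u)
    [∀ i, PartialOrder (B i)] : Prop :=
  ∃ f : A → Fin n, ∀ i : Fin n, Nonempty ({a : A // f a = i} ≃o B i)

open Order Ordinal

namespace Ordinal

noncomputable def nadd : Ordinal.{u} → Ordinal.{u} → Ordinal.{u}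
  | a, b => max (⨆ x : Set.Iio a, succ (nadd x.1 b)) (⨆ y : Set.Iio b, succ (nadd a y.1))
termination_by a b => (a, b)
decreasing_by
  · exact Prod.Lex.left _ _ x.2
  · exact Prod.Lex.right _ y.2

infixl:65 " ♯ " => nadd

theorem nadd_le_iff {a b c : Ordinal.{u}} :
    a ♯ b ≤ c ↔ (∀ a' < a, a' ♯ b < c) ∧ ∀ b' < b, a ♯ b' < c := by
  rw [nadd, max_le_iff, Ordinal.iSup_le_iff, Ordinal.iSup_le_iff]
  simp only [succ_le_iff, Subtype.forall, Set.mem_Iio]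

theorem nadd_lt_nadd_left {b c : Ordinal.{u}} (h : b < c) (a : Ordinal.{u}) : a ♯ b < a ♯ c :=
  (nadd_le_iff.1 le_rfl).2 b h

theorem nadd_lt_nadd_right {b c : Ordinal.{u}} (h : b < c) (a : Ordinal.{u}) : b ♯ a < c ♯ a :=
  (nadd_le_iff.1 le_rfl).1 b h

theorem nadd_le_nadd_left {b c : Ordinal.{u}} (h : b ≤ c) (a : Ordinal.{u}) : a ♯ b ≤ a ♯ c :=
  StrictMono.monotone (fun _ _ h => nadd_lt_nadd_left h a) h

theorem nadd_le_nadd_right {b c : Ordinal.{u}} (h : b ≤ c) (a : Ordinal.{u}) : b ♯ a ≤ c ♯ a :=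
  StrictMono.monotone (fun _ _ h => nadd_lt_nadd_right h a) h

theorem nadd_lt_nadd_of_lt_of_le {a b c d : Ordinal.{u}} (h₁ : a < b) (h₂ : c ≤ d) :
    a ♯ c < b ♯ d :=
  (nadd_lt_nadd_right h₁ c).trans_le (nadd_le_nadd_left h₂ b)

theorem nadd_lt_nadd_of_le_of_lt {a b c d : Ordinal.{u}} (h₁ : a ≤ b) (h₂ : c < d) :
    a ♯ c < b ♯ d :=
  (nadd_le_nadd_right h₁ c).trans_lt (nadd_lt_nadd_left h₂ b)

theorem nadd_le_of_strictMono {F : Ordinal.{u} → Ordinal.{u} → Ordinal.{u}}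
    (hl : ∀ b, StrictMono (F · b)) (hr : ∀ a, StrictMono (F a)) (a b : Ordinal.{u}) :
    a ♯ b ≤ F a b := by
  induction a using WellFoundedLT.induction generalizing b with
  | _ a iha =>
  induction b using WellFoundedLT.induction with
  | _ b ihb =>
  exact nadd_le_iff.2 ⟨fun a' ha' => (iha a' ha' b).trans_lt (hl b ha'),
    fun b' hb' => (ihb b' hb').trans_lt (hr a hb')⟩

theorem nadd_comm (a b : Ordinal.{u}) : a ♯ b = b ♯ a :=
  have key : ∀ a b : Ordinal.{u}, a ♯ b ≤ b ♯ a :=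
    nadd_le_of_strictMono (fun _ _ _ h => nadd_lt_nadd_left h _)
      (fun _ _ _ h => nadd_lt_nadd_right h _)
  (key a b).antisymm (key b a)

theorem natCast_nadd_natCast_le (m n : ℕ) : (m : Ordinal.{u}) ♯ n ≤ (m + n : ℕ) := by
  refine nadd_le_iff.2 ⟨fun a ha => ?_, fun b hb => ?_⟩
  · obtain ⟨k, rfl⟩ := lt_omega0.1 (ha.trans (natCast_lt_omega0 m))
    have hk : k < m := Nat.cast_lt.1 ha
    exact (natCast_nadd_natCast_le k n).trans_lt (Nat.cast_lt.2 (by omega))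
  · obtain ⟨k, rfl⟩ := lt_omega0.1 (hb.trans (natCast_lt_omega0 n))
    have hk : k < n := Nat.cast_lt.1 hb
    exact (natCast_nadd_natCast_le m k).trans_lt (Nat.cast_lt.2 (by omega))
termination_by m + n

theorem isPrincipal_nadd_omega0 : IsPrincipal (· ♯ ·) ω := by
  intro a b ha hb
  obtain ⟨m, rfl⟩ := lt_omega0.1 ha
  obtain ⟨n, rfl⟩ := lt_omega0.1 hb
  exact (natCast_nadd_natCast_le m n).trans_lt (natCast_lt_omega0 _)

theorem nadd_le_mul_div_add_mod {d : Ordinal.{u}} (hd : d ≠ 0) (hprin : IsPrincipal (· ♯ ·) d)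
    (a b : Ordinal.{u}) : a ♯ b ≤ d * (a / d ♯ b / d) + (a % d ♯ b % d) := by
  set F : Ordinal.{u} → Ordinal.{u} → Ordinal.{u} :=
    fun a b => d * (a / d ♯ b / d) + (a % d ♯ b % d)
  have hF : ∀ b, StrictMono (F · b) := by
    intro b a' a ha
    have hle : a' / d ≤ a / d :=
      lt_succ_iff.1 ((lt_mul_iff_div_lt hd).1 (ha.trans (lt_mul_succ_div a hd)))
    rcases hle.lt_or_eq with hq | hq
    · calc F a' b < d * (a' / d ♯ b / d) + d :=
            (add_lt_add_iff_left _).2 (hprin (mod_lt a' hd) (mod_lt b hd))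
        _ = d * succ (a' / d ♯ b / d) := (mul_succ _ _).symm
        _ ≤ d * (a / d ♯ b / d) := by gcongr; exact succ_le_of_lt (nadd_lt_nadd_right hq _)
        _ ≤ F a b := le_self_add
    · have hr : a' % d < a % d := by
        rwa [← div_add_mod a' d, ← div_add_mod a d, hq, add_lt_add_iff_left] at ha
      show d * (a' / d ♯ b / d) + _ < d * (a / d ♯ b / d) + _
      rw [hq]
      gcongr
      exact nadd_lt_nadd_right hr _
  have hsymm : ∀ a b, F a b = F b a := fun a b => by simp only [F, nadd_comm]
  exact nadd_le_of_strictMono hF (fun a b b' h => by rw [hsymm a b, hsymm a b']; exact hF a h) a b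

theorem isPrincipal_nadd_omega0_opow (α : Ordinal.{u}) : IsPrincipal (· ♯ ·) (ω ^ α) := by
  induction α using Ordinal.limitRecOn with
  | zero =>
    rw [opow_zero, isPrincipal_one_iff]
    exact nonpos_iff_eq_zero.1 <| nadd_le_iff.2
      ⟨fun _ h => (not_lt_zero h).elim, fun _ h => (not_lt_zero h).elim⟩
  | add_one γ ih =>
    intro a b ha hb
    have hd : ω ^ γ ≠ 0 := (opow_pos γ omega0_pos).ne'
    rw [opow_add_one] at ha hb ⊢
    have hquot : a / ω ^ γ ♯ b / ω ^ γ < ω :=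
      isPrincipal_nadd_omega0 ((lt_mul_iff_div_lt hd).1 ha) ((lt_mul_iff_div_lt hd).1 hb)
    calc a ♯ b ≤ ω ^ γ * (a / ω ^ γ ♯ b / ω ^ γ) + (a % ω ^ γ ♯ b % ω ^ γ) :=
          nadd_le_mul_div_add_mod hd ih a b
      _ < ω ^ γ * (a / ω ^ γ ♯ b / ω ^ γ) + ω ^ γ := by
          gcongr; exact ih (mod_lt a hd) (mod_lt b hd)
      _ = ω ^ γ * succ (a / ω ^ γ ♯ b / ω ^ γ) := (mul_succ _ _).symm
      _ ≤ ω ^ γ * ω := by gcongr; exact succ_le_of_lt hquot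
  | limit α hα ih =>
    intro a b ha hb
    obtain ⟨γ₁, hγ₁, ha⟩ := (lt_opow_of_isSuccLimit omega0_ne_zero hα).1 ha
    obtain ⟨γ₂, hγ₂, hb⟩ := (lt_opow_of_isSuccLimit omega0_ne_zero hα).1 hb
    have hmono : ∀ {x y : Ordinal.{u}}, x ≤ y → ω ^ x ≤ ω ^ y := opow_le_opow_right omega0_pos
    exact (ih _ (max_lt hγ₁ hγ₂) (ha.trans_le (hmono (le_max_left _ _)))
      (hb.trans_le (hmono (le_max_right _ _)))).trans_le (hmono (max_lt hγ₁ hγ₂).le)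

end Ordinal

section Rank

variable {P : Type u} [PartialOrder P] [WellFoundedLT P]

theorem elRank_strictMono : StrictMono (elRank : P → Ordinal.{u}) :=
  fun _ _ => IsWellFounded.rank_lt_of_rel

theorem elRank_le_of_strictMono {g : P → Ordinal.{u}} (hg : StrictMono g) (p : P) :
    elRank p ≤ g p := by
  induction p using WellFoundedLT.induction with
  | _ p ih =>
  rw [elRank, IsWellFounded.rank_eq]
  exact Ordinal.iSup_le fun q => succ_le_of_lt ((ih q q.2).trans_lt (hg q.2))

theorem ordRank_le_of_strictMono {Q : Type u} [PartialOrder Q] [WellFoundedLT Q] {g : P → Q}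
    (hg : StrictMono g) : ordRank P ≤ ordRank Q :=
  Ordinal.iSup_le fun p =>
    (add_le_add_left (elRank_le_of_strictMono (elRank_strictMono.comp hg) p) 1).trans
      (Ordinal.le_iSup (fun q : Q => elRank q + 1) (g p))

theorem OrderIso.ordRank_eq {Q : Type u} [PartialOrder Q] [WellFoundedLT Q] (e : P ≃o Q) :
    ordRank P = ordRank Q :=
  (ordRank_le_of_strictMono e.strictMono).antisymm (ordRank_le_of_strictMono e.symm.strictMono)

noncomputable def relRank (S : Set P) (p : P) : Ordinal.{u} :=
  ⨆ q : {q : S // (q : P) < p}, elRank q.1 + 1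

theorem relRank_mono (S : Set P) {q p : P} (h : q < p) : relRank S q ≤ relRank S p :=
  Ordinal.iSup_le fun r =>
    Ordinal.le_iSup (fun r : {r : S // (r : P) < p} => elRank r.1 + 1) ⟨r.1, r.2.trans h⟩

theorem relRank_le_elRank {S : Set P} {q : P} (hq : q ∈ S) :
    relRank S q ≤ elRank (⟨q, hq⟩ : S) :=
  Ordinal.iSup_le fun r =>
    add_one_le_of_lt (elRank_strictMono (show r.1 < ⟨q, hq⟩ from r.2))

theorem relRank_lt_relRank {S : Set P} {q p : P} (hq : q ∈ S) (h : q < p) :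
    relRank S q < relRank S p :=
  (relRank_le_elRank hq).trans_lt <| (lt_add_one _).trans_le <|
    Ordinal.le_iSup (fun r : {r : S // (r : P) < p} => elRank r.1 + 1) ⟨⟨q, hq⟩, h⟩

theorem relRank_le_ordRank (S : Set P) (p : P) : relRank S p ≤ ordRank S :=
  Ordinal.iSup_le fun r => Ordinal.le_iSup (fun r : S => elRank r + 1) r.1

theorem relRank_lt_ordRank {S : Set P} {p : P} (hp : p ∈ S) : relRank S p < ordRank S :=
  (relRank_le_elRank hp).trans_lt <| (lt_add_one _).trans_le <|
    Ordinal.le_iSup (fun r : S => elRank r + 1) ⟨p, hp⟩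

theorem ordRank_union_le (S T : Set P) : ordRank ↥(S ∪ T) ≤ ordRank S ♯ ordRank T := by
  have hg : StrictMono fun p : ↥(S ∪ T) => relRank S p ♯ relRank T p := by
    intro q p h
    rcases q.2 with hq | hq
    exacts [nadd_lt_nadd_of_lt_of_le (relRank_lt_relRank hq h) (relRank_mono T h),
      nadd_lt_nadd_of_le_of_lt (relRank_mono S h) (relRank_lt_relRank hq h)]
  refine Ordinal.iSup_le fun p => add_one_le_of_lt <| (elRank_le_of_strictMono hg p).trans_lt ?_
  rcases p.2 with hp | hp
  exacts [nadd_lt_nadd_of_lt_of_le (relRank_lt_ordRank hp) (relRank_le_ordRank T p),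
    nadd_lt_nadd_of_le_of_lt (relRank_le_ordRank S p) (relRank_lt_ordRank hp)]

theorem ordRank_biUnion_lt {ι : Type*} {S : ι → Set P} {o : Ordinal.{u}}
    (ho : IsPrincipal (· ♯ ·) o) (ho₀ : 0 < o) (s : Finset ι) (hS : ∀ i ∈ s, ordRank (S i) < o) :
    ordRank ↥(⋃ i ∈ s, S i) < o := by
  classical
  induction s using Finset.induction with
  | empty => simpa [ordRank] using ho₀
  | insert i s _ ih =>
    rw [Finset.set_biUnion_insert]
    exact (ordRank_union_le _ _).trans_lt <| ho (hS i (s.mem_insert_self i))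
      (ih fun j hj => hS j (Finset.mem_insert_of_mem hj))

end Rank

/-- Ordinals of the form `ω^α` are rank-sum-indecomposable for well-founded partial orders:
if a well-founded partial order `P` is a sum-augmentation of `(B 0, …, B (n-1))` and
`rank P = ω^α`, then `rank (B i) = ω^α` for some `i`. -/
theorem omega_pow_rank_sum_indecomposable {n : ℕ} {P : Type u} [PartialOrder P]
    [WellFoundedLT P] (B : Fin n → Type u) [∀ i, PartialOrder (B i)]
    [∀ i, WellFoundedLT (B i)] (hsum : SumAugmentation P B) (α : Ordinal.{u})
    (hrank : ordRank P = Ordinal.omega0 ^ α) :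
    ∃ i : Fin n, ordRank (B i) = Ordinal.omega0 ^ α := by
  obtain ⟨f, hf⟩ := hsum
  by_contra! hne
  have hpart : ∀ i, ordRank {a : P | f a = i} < ω ^ α := fun i =>
    ((ordRank_le_of_strictMono (Subtype.strictMono_coe _)).trans_eq hrank).lt_of_ne
      ((hf i).some.ordRank_eq.trans_ne (hne i))
  have hcover : (⋃ i ∈ Finset.univ, {a : P | f a = i}) = Set.univ :=
    Set.eq_univ_of_forall fun a => Set.mem_iUnion₂.2 ⟨f a, Finset.mem_univ _, rfl⟩
  have hlt := ordRank_biUnion_lt (isPrincipal_nadd_omega0_opow α) (opow_pos α omega0_pos)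
    Finset.univ fun i _ => hpart i
  rw [hcover, (OrderIso.Set.univ : (Set.univ : Set P) ≃o P).ordRank_eq, hrank] at hlt
  exact hlt.false
end

section
/- Let P be a countable wulpo which is a tamely colorable box-augmentation of partial orders (P₁, …, Pₙ) via the bijection η, and let c ∈ ℕ be such that for all antichains Aᵢ ⊆ Pᵢ, every chain contained in η(A₁ × ⋯ × Aₙ) has fewer than c elements. Then there is a map μ : P → {1, …, c} such that for every chain L ⊆ P and all p, p' ∈ L: μ(p) = μ(p') if and only if p ≡ p', where ≡ is the same-factor equivalence. -/
universe u

/-- A partial order is upwards linear if for every `p` the set `{x | p < x}` is linearly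
ordered. -/
def UpwardsLinear (P : Type u) [PartialOrder P] : Prop :=
  ∀ p x y : P, p < x → p < y → x ≤ y ∨ y ≤ x

/-- Two elements lie in the same connected component of the comparability graph. -/
def SameComp {B : Type u} [PartialOrder B] (a b : B) : Prop :=
  Relation.ReflTransGen (fun x y : B => x ≤ y ∨ y ≤ x) a b

/-- `η` witnesses that `A` is a box-augmentation of the family `B`. -/
def IsBoxAugmentation {n : ℕ} (A : Type u) [PartialOrder A] (B : Fin n → Type u)
    [∀ i, PartialOrder (B i)] (η : (∀ i, B i) ≃ A) : Prop :=
  ∀ (k : Fin n) (d : ∀ i, B i) (e e' : B k),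
    e ≤ e' ↔ η (Function.update d k e) ≤ η (Function.update d k e')

/-- The box-augmentation `η` is tamely colorable: there are finite colorings
`σ i : B i × B i → C i` such that the tuple of colors of the componentwise preimages
determines the order relation on `A`. -/
def TamelyColorable {n : ℕ} (A : Type u) [PartialOrder A] (B : Fin n → Type u)
    [∀ i, PartialOrder (B i)] (η : (∀ i, B i) ≃ A) : Prop :=
  ∃ (C : Fin n → Type u) (_ : ∀ i, Finite (C i)) (σ : ∀ i, B i → B i → C i),
    ∀ b b' c c' : ∀ i, B i, (∀ i, σ i (b i) (b' i) = σ i (c i) (c' i)) →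
      (η b ≤ η b' ↔ η c ≤ η c')

/-!
Above any `p` the order is a chain, and it meets fewer than `c` same-factor classes: a finite
set of pairwise inequivalent comparable elements can be moved coordinatewise upwards, keeping
classes and comparability, until its coordinates form antichains, where the hypothesis on `c`
applies. The classes reachable from `p` are linearly ordered by how far up the chain above `p`
they remain reachable (ties broken by a fixed well-order), and this order is compatible with
moving `p` upwards along a chain. The colour of `p` is the number of classes ranked above its own.
-/

open Set Function

section UpwardsLinear

variable {P : Type*} [PartialOrder P]

theorem UpwardsLinear.le_total (hP : UpwardsLinear P) {p x y : P} (hx : p ≤ x) (hy : p ≤ y) :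
    x ≤ y ∨ y ≤ x := by
  rcases hx.eq_or_lt with rfl | hx
  · exact .inl hy
  rcases hy.eq_or_lt with rfl | hy
  · exact .inr hx.le
  exact hP p x y hx hy

theorem UpwardsLinear.isChain_Ici (hP : UpwardsLinear P) (p : P) : IsChain (· ≤ ·) (Ici p) :=
  fun _ hx _ hy _ => hP.le_total hx hy

theorem UpwardsLinear.isChain_insert (hP : UpwardsLinear P) {s : Set P}
    (hs : IsChain (· ≤ ·) s) {a b : P} (ha : a ∈ s) (hab : a ≤ b) :
    IsChain (· ≤ ·) (insert b s) :=
  hs.insert fun _ hz _ =>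
    (hs.total ha hz).elim (hP.le_total hab) fun hza => .inr (hza.trans hab)

end UpwardsLinear

section Rank

variable {P κ : Type*} [PartialOrder P] {f : P → κ} {p q : P} {k l m : κ}

variable (f) in
def reachAbove (p : P) (k : κ) : Set P := {r | p ≤ r ∧ k ∈ f '' Ici r}

variable (f) in
def precAt (p : P) (k l : κ) : Prop :=
  reachAbove f p k ⊂ reachAbove f p l ∨
    (reachAbove f p k = reachAbove f p l ∧ WellOrderingRel k l)

variable (f) in
noncomputable def rankAt (p : P) : ℕ := {l | precAt f p (f p) l}.ncard

theorem mem_reachAbove_of_le {r r' : P} (hpr : p ≤ r) (hrr' : r ≤ r')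
    (hr' : r' ∈ reachAbove f p k) : r ∈ reachAbove f p k :=
  let ⟨x, hx, hxk⟩ := hr'.2
  ⟨hpr, x, hrr'.trans hx, hxk⟩

theorem reachAbove_of_le (hpq : p ≤ q) (k : κ) :
    reachAbove f q k = reachAbove f p k ∩ Ici q := by
  ext r
  exact ⟨fun ⟨hqr, hk⟩ => ⟨⟨hpq.trans hqr, hk⟩, hqr⟩, fun ⟨⟨_, hk⟩, hqr⟩ => ⟨hqr, hk⟩⟩

theorem reachAbove_total (hP : UpwardsLinear P) (p : P) (k l : κ) :
    reachAbove f p k ⊆ reachAbove f p l ∨ reachAbove f p l ⊆ reachAbove f p k := by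
  refine or_iff_not_imp_left.2 fun h r' hr' => ?_
  obtain ⟨r, hrk, hrl⟩ := not_subset.1 h
  rcases hP.le_total hrk.1 hr'.1 with hrr' | hr'r
  · exact absurd (mem_reachAbove_of_le hrk.1 hrr' hr') hrl
  · exact mem_reachAbove_of_le hr'.1 hr'r hrk

theorem precAt.subset (h : precAt f p k l) : reachAbove f p k ⊆ reachAbove f p l :=
  h.elim (·.subset) (·.1.subset)

theorem precAt_irrefl : ¬ precAt f p k k :=
  fun h => h.elim (ssubset_irrefl _) fun h => irrefl _ h.2

theorem precAt.ne (h : precAt f p k l) : k ≠ l := by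
  rintro rfl
  exact precAt_irrefl h

theorem precAt.trans (h₁ : precAt f p k l) (h₂ : precAt f p l m) : precAt f p k m := by
  rcases h₁ with h₁ | ⟨e₁, w₁⟩ <;> rcases h₂ with h₂ | ⟨e₂, w₂⟩
  · exact .inl (h₁.trans h₂)
  · exact .inl (e₂ ▸ h₁)
  · exact .inl (e₁ ▸ h₂)
  · exact .inr ⟨e₁.trans e₂, _root_.trans w₁ w₂⟩

theorem precAt.asymm (h : precAt f p k l) : ¬ precAt f p l k :=
  fun h' => precAt_irrefl (h.trans h')

theorem precAt_or_precAt (hP : UpwardsLinear P) (p : P) (hkl : k ≠ l) :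
    precAt f p k l ∨ precAt f p l k := by
  obtain e | s | s : reachAbove f p k = reachAbove f p l ∨
      reachAbove f p k ⊂ reachAbove f p l ∨ reachAbove f p l ⊂ reachAbove f p k := by
    rcases reachAbove_total hP p k l with h | h
    · exact h.eq_or_ssubset.imp_right .inl
    · exact h.eq_or_ssubset.elim (.inl ·.symm) (.inr ∘ .inr)
  · rcases trichotomous_of WellOrderingRel k l with w | rfl | w
    · exact .inl (.inr ⟨e, w⟩)
    · exact absurd rfl hkl
    · exact .inr (.inr ⟨e.symm, w⟩)
  · exact .inl (.inl s)
  · exact .inr (.inl s)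

theorem precAt.of_le (hP : UpwardsLinear P) (hpq : p ≤ q) (hk : k ∈ f '' Ici q)
    (h : precAt f p k l) : precAt f q k l := by
  rw [precAt, reachAbove_of_le hpq, reachAbove_of_le hpq]
  rcases h with h | ⟨e, w⟩
  · refine .inl ⟨inter_subset_inter_left _ h.subset, fun hsub => ?_⟩
    obtain ⟨r, hrl, hrk⟩ := exists_of_ssubset h
    have hqr : q ≤ r := (hP.le_total hpq hrl.1).resolve_right fun hrq =>
      hrk (mem_reachAbove_of_le hrl.1 hrq ⟨hpq, hk⟩)
    exact hrk (hsub ⟨hrl, hqr⟩).1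
  · exact .inr ⟨by rw [e], w⟩

theorem precAt_self_iff_of_le (hP : UpwardsLinear P) (hpq : p ≤ q) :
    precAt f q (f q) l ↔ precAt f p (f q) l := by
  have hq : f q ∈ f '' Ici q := ⟨q, le_rfl, rfl⟩
  refine ⟨fun h => ?_, precAt.of_le hP hpq hq⟩
  have hl : l ∈ f '' Ici q := (h.subset ⟨le_rfl, hq⟩).2
  exact (precAt_or_precAt hP p h.ne).resolve_right fun h' => h.asymm (h'.of_le hP hpq hl)

theorem setOf_precAt_subset (hk : k ∈ f '' Ici p) : {l | precAt f p k l} ⊆ f '' Ici p :=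
  fun _ h => (h.subset ⟨le_rfl, hk⟩).2

theorem setOf_precAt_ssubset (h : precAt f p k l) : {m | precAt f p l m} ⊂ {m | precAt f p k m} :=
  ⟨fun _ => h.trans, fun hsub => precAt_irrefl (hsub h)⟩

theorem rankAt_lt_ncard (hfin : (f '' Ici p).Finite) : rankAt f p < (f '' Ici p).ncard := by
  have hp : f p ∈ f '' Ici p := ⟨p, le_rfl, rfl⟩
  refine ncard_lt_ncard ⟨setOf_precAt_subset hp, fun hsub => ?_⟩ hfin
  exact precAt_irrefl (hsub hp)

theorem rankAt_eq_rankAt_iff (hP : UpwardsLinear P) (hfin : (f '' Ici p).Finite) (hpq : p ≤ q) :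
    rankAt f p = rankAt f q ↔ f p = f q := by
  have hp : f p ∈ f '' Ici p := ⟨p, le_rfl, rfl⟩
  have hq : f q ∈ f '' Ici p := ⟨q, hpq, rfl⟩
  simp only [rankAt, precAt_self_iff_of_le hP hpq]
  refine ⟨fun h => by_contra fun hne => ?_, fun h => by rw [h]⟩
  rcases precAt_or_precAt hP p hne with h' | h'
  · exact (ncard_lt_ncard (setOf_precAt_ssubset h') (hfin.subset (setOf_precAt_subset hp))).ne' h
  · exact (ncard_lt_ncard (setOf_precAt_ssubset h') (hfin.subset (setOf_precAt_subset hq))).ne h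

end Rank

section BoxAugmentation

variable {X : Type*} [PartialOrder X] {a b d : X}

theorem SameComp.of_le (h : a ≤ b) : SameComp a b := .single (.inl h)

theorem SameComp.symm (h : SameComp a b) : SameComp b a := by
  induction h with
  | refl => exact .refl
  | tail _ hxy ih => exact .head hxy.symm ih

theorem SameComp.trans (h : SameComp a b) (h' : SameComp b d) : SameComp a d :=
  Relation.ReflTransGen.trans h h'

variable {n : ℕ} {P : Type u} [PartialOrder P] {B : Fin n → Type u} [∀ i, PartialOrder (B i)]
  {η : (∀ i, B i) ≃ P}

variable (η) in
def sameFactorSetoid : Setoid P where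
  r p q := ∀ i, SameComp (η.symm p i) (η.symm q i)
  iseqv := ⟨fun _ _ => .refl, fun h i => (h i).symm, fun h h' i => (h i).trans (h' i)⟩

theorem forall_update_update_mem {ι κ : Type*} [DecidableEq ι] [DecidableEq κ] {β : κ → Type*}
    {S : ι → ∀ j, Set (β j)} {g : ι → ∀ j, β j} (hg : ∀ x j, g x j ∈ S x j) {a : ι} {i : κ}
    {e : β i} (he : e ∈ S a i) (x : ι) (j : κ) : update g a (update (g a) i e) x j ∈ S x j := by
  rcases eq_or_ne x a with rfl | hx
  · rcases eq_or_ne j i with rfl | hj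
    · simpa using he
    · simpa [hj] using hg x j
  · simpa [hx] using hg x j

theorem IsBoxAugmentation.lt_update (hbox : IsBoxAugmentation P B η) (d : ∀ i, B i) {k : Fin n}
    {e : B k} (h : d k < e) : η d < η (update d k e) := by
  have hle := (hbox k d (d k) e).1 h.le
  rw [update_eq_self] at hle
  refine hle.lt_of_ne fun heq => h.ne ?_
  simpa using congrFun (η.injective heq) k

theorem IsBoxAugmentation.exists_antichain_coords (hP : UpwardsLinear P)
    (hbox : IsBoxAugmentation P B η) {ι : Type*} [Finite ι] (f : ι → P)
    (hf : IsChain (· ≤ ·) (range f)) :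
    ∃ g : ι → ∀ i, B i, (∀ a i, SameComp (g a i) (η.symm (f a) i)) ∧
      IsChain (· ≤ ·) (range (η ∘ g)) ∧ ∀ i, IsAntichain (· ≤ ·) (range (g · i)) := by
  classical
  let V : ∀ i, Set (B i) := fun i => range fun a => η.symm (f a) i
  let C : Set (ι → ∀ i, B i) := {g | (∀ a i, g a i ∈ V i) ∧
    (∀ a i, SameComp (g a i) (η.symm (f a) i)) ∧ IsChain (· ≤ ·) (range (η ∘ g))}
  have hC : C.Finite :=
    (Finite.pi fun _ => Finite.pi fun _ => finite_range _).subset fun g hg a _ i _ => hg.1 a i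
  have h₀ : η.symm ∘ f ∈ C :=
    ⟨fun a i => ⟨a, rfl⟩, fun _ _ => .refl, by simpa [comp_def] using hf⟩
  -- the moves below strictly increase `η ∘ g` pointwise, so a maximal configuration admits none
  obtain ⟨g, ⟨hgV, hgf, hgchain⟩, hmax⟩ := hC.exists_maximalFor (η ∘ ·) C ⟨_, h₀⟩
  refine ⟨g, hgf, hgchain, fun i => ?_⟩
  rintro _ ⟨a, rfl⟩ _ ⟨b, rfl⟩ hne hle
  let g' := update g a (update (g a) i (g b i))
  have hg'x : ∀ x, x ≠ a → g' x = g x := fun x hx => update_of_ne hx ..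
  have hlt : η (g a) < η (g' a) := by
    simpa [g'] using hbox.lt_update (g a) (lt_of_le_of_ne hle hne)
  have hg'C : g' ∈ C := by
    refine ⟨forall_update_update_mem hgV (hgV b i),
      forall_update_update_mem (S := fun x j => {y | SameComp y (η.symm (f x) j)}) hgf
        ((SameComp.of_le hle).symm.trans (hgf a i)), ?_⟩
    refine (hP.isChain_insert hgchain ⟨a, rfl⟩ hlt.le).mono ?_
    rintro _ ⟨x, rfl⟩
    by_cases hx : x = a
    · exact .inl (by rw [hx]; rfl)
    · exact .inr ⟨x, by simp [hg'x x hx]⟩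
  have hgg' : η ∘ g ≤ η ∘ g' := fun x => by
    by_cases hx : x = a
    · exact hx ▸ hlt.le
    · simp [hg'x x hx]
  exact (hmax hg'C hgg' a).not_gt hlt

theorem IsBoxAugmentation.card_lt (hP : UpwardsLinear P) (hbox : IsBoxAugmentation P B η)
    {c : ℕ} (hc : ∀ A : ∀ i, Set (B i), (∀ i, IsAntichain (· ≤ ·) (A i)) →
      ∀ L : Set P, IsChain (· ≤ ·) L → L ⊆ η '' {f | ∀ i, f i ∈ A i} →
        L.Finite ∧ L.ncard < c)
    {ι : Type*} [Finite ι] (f : ι → P) (hf : IsChain (· ≤ ·) (range f))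
    (hinj : Injective (Quotient.mk (sameFactorSetoid η) ∘ f)) : Nat.card ι < c := by
  obtain ⟨g, hgf, hgchain, hganti⟩ := hbox.exists_antichain_coords hP f hf
  have hmk : ∀ a, Quotient.mk (sameFactorSetoid η) (η (g a)) = Quotient.mk _ (f a) :=
    fun a => Quotient.sound fun i => by simpa using hgf a i
  have hinj' : Injective (η ∘ g) := fun a b h => hinj <| by
    simp only [comp_apply, ← hmk] at h ⊢
    rw [h]
  obtain ⟨-, hlt⟩ := hc (fun i => range (g · i)) hganti (range (η ∘ g)) hgchain
    (range_subset_iff.2 fun a => ⟨g a, fun i => ⟨a, rfl⟩, rfl⟩)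
  rwa [ncard_range_of_injective hinj'] at hlt

theorem IsBoxAugmentation.finite_classes_Ici (hP : UpwardsLinear P)
    (hbox : IsBoxAugmentation P B η) {c : ℕ}
    (hc : ∀ A : ∀ i, Set (B i), (∀ i, IsAntichain (· ≤ ·) (A i)) →
      ∀ L : Set P, IsChain (· ≤ ·) L → L ⊆ η '' {f | ∀ i, f i ∈ A i} →
        L.Finite ∧ L.ncard < c) (p : P) :
    (Quotient.mk (sameFactorSetoid η) '' Ici p).Finite ∧
      (Quotient.mk (sameFactorSetoid η) '' Ici p).ncard < c := by
  set S := Quotient.mk (sameFactorSetoid η) '' Ici p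
  have hsub : ∀ t ⊆ S, t.Finite → t.ncard < c := by
    intro t ht htfin
    have := htfin.to_subtype
    choose r hr using fun K : t => ht K.2
    have hinj : Injective (Quotient.mk (sameFactorSetoid η) ∘ r) :=
      fun K K' h => Subtype.ext <| (hr K).2.symm.trans (h.trans (hr K').2)
    have hchain := (hP.isChain_Ici p).mono (range_subset_iff.2 fun K => (hr K).1)
    simpa using hbox.card_lt hP hc r hchain hinj
  have hS : S.Finite := by_contra fun hinf => by
    obtain ⟨t, ht, htfin, htc⟩ := Infinite.exists_subset_ncard_eq hinf c
    exact (hsub t ht htfin).ne htc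
  exact ⟨hS, hsub S subset_rfl hS⟩

end BoxAugmentation

theorem exists_coloring_of_tamelyColorable_general {n : ℕ} {P : Type u} [PartialOrder P]
    (B : Fin n → Type u) [∀ i, PartialOrder (B i)]
    (hP : UpwardsLinear P)
    (η : (∀ i, B i) ≃ P) (hbox : IsBoxAugmentation P B η)
    (c : ℕ)
    (hc : ∀ A : ∀ i, Set (B i), (∀ i, IsAntichain (· ≤ ·) (A i)) →
      ∀ L : Set P, IsChain (· ≤ ·) L → L ⊆ η '' {f | ∀ i, f i ∈ A i} →
        L.Finite ∧ L.ncard < c) :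
    ∃ μ : P → Fin c, ∀ L : Set P, IsChain (· ≤ ·) L → ∀ p ∈ L, ∀ p' ∈ L,
      (μ p = μ p' ↔ ∀ i, SameComp (η.symm p i) (η.symm p' i)) := by
  let cls := Quotient.mk (sameFactorSetoid η)
  have hfin := hbox.finite_classes_Ici hP hc
  refine ⟨fun p => ⟨rankAt cls p, (rankAt_lt_ncard (hfin p).1).trans (hfin p).2⟩,
    fun L hL p hp p' hp' => ?_⟩
  have key : ∀ {x y}, x ≤ y → (rankAt cls x = rankAt cls y ↔ sameFactorSetoid η x y) :=
    fun hxy => (rankAt_eq_rankAt_iff hP (hfin _).1 hxy).trans Quotient.eq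
  rw [Fin.mk.injEq]
  rcases hL.total hp hp' with h | h
  · exact key h
  · exact eq_comm.trans ((key h).trans (Setoid.comm' _))

/-- Let `P` be a countable wulpo which is a tamely colorable box-augmentation of
`(B 0, …, B (n-1))` via `η` and let `c` bound the length of chains contained in images of
antichains. Then there is a coloring `μ : P → {1, …, c}` such that on every chain `L ⊆ P`,
two elements receive the same color iff they are same-factor equivalent. -/
theorem exists_coloring_of_tamelyColorable {n : ℕ} {P : Type u} [PartialOrder P]
    [WellFoundedLT P] [Countable P] (B : Fin n → Type u) [∀ i, PartialOrder (B i)]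
    (hP : UpwardsLinear P)
    (η : (∀ i, B i) ≃ P) (hbox : IsBoxAugmentation P B η)
    (htame : TamelyColorable P B η) (c : ℕ)
    (hc : ∀ A : ∀ i, Set (B i), (∀ i, IsAntichain (· ≤ ·) (A i)) →
      ∀ L : Set P, IsChain (· ≤ ·) L → L ⊆ η '' {f | ∀ i, f i ∈ A i} →
        L.Finite ∧ L.ncard < c) :
    ∃ μ : P → Fin c, ∀ L : Set P, IsChain (· ≤ ·) L → ∀ p ∈ L, ∀ p' ∈ L,
      (μ p = μ p' ↔ ∀ i, SameComp (η.symm p i) (η.symm p' i)) :=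
  exists_coloring_of_tamelyColorable_general B hP η hbox c hc
end
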